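/- arXiv:2505.07743 — 2 statements merged into one kernel-verified Lean document; each statement's English description precedes it below -/
import Mathlib

section
/- Let r > 0, 0 ≤ s ≤ r/2 (with s = nd), θ real, and R = sqrt(r² + s² − 2rs·cos θ). Then |1/R − 1/r| ≤ s·|cos θ|/r² + C·s²/r³ for some absolute constant C. -/
set_option maxHeartbeats 2000000


theorem stmt_4 :
    ∃ C : ℝ, 0 < C ∧
      ∀ r s θ : ℝ, 0 < r → 0 ≤ s → s ≤ r / 2 →
        |1 / Real.sqrt (r ^ 2 + s ^ 2 - 2 * r * s * Real.cos θ) - 1 / r|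
          ≤ s * |Real.cos θ| / r ^ 2 + C * s ^ 2 / r ^ 3 := by
  refine ⟨100, by norm_num, ?_⟩
  intro r s θ hr hs hsr
  set c := Real.cos θ with hc
  have hc1 : c ≤ 1 := Real.cos_le_one θ
  have hc2 : -1 ≤ c := Real.neg_one_le_cos θ
  set B := |c| with hB
  have hB0 : 0 ≤ B := abs_nonneg c
  have hB1 : B ≤ 1 := abs_le.mpr ⟨hc2, hc1⟩
  have hcB : c ≤ B := le_abs_self c
  have hcB' : -B ≤ c := neg_abs_le c
  have hrs : 0 ≤ r * s := mul_nonneg hr.le hs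
  have hrs1 : 0 ≤ r * s * (1 - c) := mul_nonneg hrs (by linarith)
  have hrs2 : 0 ≤ r * s * (1 + c) := mul_nonneg hrs (by linarith)
  have hrad : 0 ≤ r ^ 2 + s ^ 2 - 2 * r * s * c := by nlinarith [sq_nonneg (r - s)]
  set x := Real.sqrt (r ^ 2 + s ^ 2 - 2 * r * s * c) with hxdef
  have hx2 : x ^ 2 = r ^ 2 + s ^ 2 - 2 * r * s * c := Real.sq_sqrt hrad
  have hx0 : 0 ≤ x := Real.sqrt_nonneg _
  clear_value c B x
  have hxlb : r / 2 ≤ x := by nlinarith [sq_nonneg (r - s), sq_nonneg (x - r / 2)]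
  have hxub : x ≤ 3 * r / 2 := by nlinarith [sq_nonneg (r + s), sq_nonneg (x - 3 * r / 2)]
  have hxpos : 0 < x := lt_of_lt_of_le (by linarith) hxlb
  have hid : (r - x) * (r + x) = 2 * r * s * c - s ^ 2 := by nlinarith [hx2]
  -- r - x ≤ 4s/3
  have h4 : r - x ≤ 4 * s / 3 := by nlinarith [hid, hxlb, hrs1, sq_nonneg s]
  -- x(r+x) ≥ 2r² - (14/3) s r
  have h5 : 2 * r ^ 2 - 14 / 3 * s * r ≤ x * (r + x) := by
    rcases le_or_gt r x with h | h
    · nlinarith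
    · nlinarith [mul_nonneg hs hr.le, mul_le_mul h4 (show x + 2 * r ≤ 7 * r / 2 by linarith)
        (by linarith) (by positivity)]
  -- x(r+x) ≥ 3r²/4
  have h5b : 3 / 4 * r ^ 2 ≤ x * (r + x) := by
    have h := mul_le_mul hxlb (show r + r / 2 ≤ r + x by linarith) (by linarith) hx0
    linarith [h]
  have hsB : 0 ≤ s * B := mul_nonneg hs hB0
  have hsBr : 0 ≤ s * B * r := mul_nonneg hsB hr.le
  -- products
  have A1 : 2 * s * r ^ 3 * c ≤ 2 * s * r ^ 3 * B :=
    mul_le_mul_of_nonneg_left hcB (by positivity)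
  have A1' : 2 * s * r ^ 3 * (-B) ≤ 2 * s * r ^ 3 * c :=
    mul_le_mul_of_nonneg_left hcB' (by positivity)
  have A2 : s * B * r * (2 * r ^ 2 - 14 / 3 * s * r) ≤ s * B * r * (x * (r + x)) :=
    mul_le_mul_of_nonneg_left h5 hsBr
  have A3 : 100 * s ^ 2 * (3 / 4 * r ^ 2) ≤ 100 * s ^ 2 * (x * (r + x)) :=
    mul_le_mul_of_nonneg_left h5b (by positivity)
  have hsBr2 : s * B * r ^ 2 ≤ s * r ^ 2 := by nlinarith [mul_nonneg hs (sq_nonneg r)]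
  have hmul : |r - x| * r ^ 2 * (r + x) ≤ (s * B * r + 100 * s ^ 2) * x * (r + x) := by
    rcases abs_cases (r - x) with ⟨h1, h2⟩ | ⟨h1, h2⟩ <;> rw [h1] <;>
      nlinarith [hid, A1, A1', A2, A3, hsBr2, mul_nonneg (mul_nonneg hs hs) (sq_nonneg r)]
  have hrx : (0 : ℝ) < r + x := by linarith
  have key : |r - x| * r ^ 2 ≤ (s * B * r + 100 * s ^ 2) * x :=
    le_of_mul_le_mul_right hmul hrx
  have heq : 1 / x - 1 / r = (r - x) / (x * r) := by field_simp
  rw [heq, abs_div, abs_of_pos (mul_pos hxpos hr), div_le_iff₀ (mul_pos hxpos hr)]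
  have hgoal : (s * B / r ^ 2 + 100 * s ^ 2 / r ^ 3) * (x * r)
      = ((s * B * r + 100 * s ^ 2) * x) / r ^ 2 := by
    field_simp
  rw [hgoal, le_div_iff₀ (by positivity : (0:ℝ) < r ^ 2)]
  calc |r - x| * r ^ 2 ≤ (s * B * r + 100 * s ^ 2) * x := key
    _ = _ := by ring
end

section
/- Let r > 0, 0 < D ≤ r, θ real, and R = sqrt(r² + D² − 2rD·cos θ). Then the phase difference satisfies |(R − r) + D·cos θ| ≤ D²/(2r). -/
theorem stmt_5 (r D θ : ℝ) (hr : 0 < r) (hD : 0 < D) (hDr : D ≤ r) :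
    |(Real.sqrt (r ^ 2 + D ^ 2 - 2 * r * D * Real.cos θ) - r) + D * Real.cos θ|
      ≤ D ^ 2 / (2 * r) := by
  set c := Real.cos θ with hc
  have hc1 : c ≤ 1 := Real.cos_le_one θ
  have hc2 : -1 ≤ c := Real.neg_one_le_cos θ
  have ha : 0 ≤ r - D * c := by nlinarith
  have h1 : 0 ≤ D ^ 2 * (1 - c) * (1 + c) :=
    mul_nonneg (mul_nonneg (sq_nonneg D) (by linarith)) (by linarith)
  have hx : 0 ≤ r ^ 2 + D ^ 2 - 2 * r * D * c := by nlinarith [sq_nonneg (r - D * c)]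
  have hs := Real.sq_sqrt hx
  set s := Real.sqrt (r ^ 2 + D ^ 2 - 2 * r * D * c) with hsdef
  have hsnn : 0 ≤ s := Real.sqrt_nonneg _
  set q := D ^ 2 / (2 * r) with hqdef
  have hq : q * (2 * r) = D ^ 2 := div_mul_cancel₀ _ (by positivity)
  have hqnn : 0 ≤ q := by positivity
  rw [abs_le]
  constructor
  · nlinarith [hs, h1, mul_nonneg hsnn ha, sq_nonneg (s - (r - D * c))]
  · nlinarith [hs, hq, sq_nonneg (q - D * c), mul_nonneg hsnn (add_nonneg ha hqnn),
      sq_nonneg (s - ((r - D * c) + q))]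
end
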